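/- arXiv:1207.6226 — 6 statements merged into one kernel-verified Lean document; each statement's English description precedes it below -/
import Mathlib

section
/- Locality of convex programs: if constraint sets C1, C2 satisfy J*(C1) = J*(C1 ∪ C2) < ∞, then for any additional constraint c, J*(C1 ∪ {c}) > J*(C1) if and only if J*(C1 ∪ C2 ∪ {c}) > J*(C1 ∪ C2), assuming each constraint subproblem has a unique minimizer. -/
/-! If the optimum does not move when the constraints `C2` are added to `C1`, then by uniqueness
the two problems share their minimizer `x`. For a problem with unique minimizer `x`, adding a
constraint `c` raises the optimal value exactly when `x` violates `c`: if `x` satisfies `c` it stays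
optimal, and if the value does not rise, the new minimizer is also a minimizer of the old problem,
hence equals `x` and satisfies `c`. So both sides of the equivalence say `0 < f c x`. -/

def Sat {ι : Type*} {d : ℕ} (X : Set (Fin d → ℝ)) (f : ι → (Fin d → ℝ) → ℝ)
    (S : Set ι) : Set (Fin d → ℝ) :=
  {x ∈ X | ∀ j ∈ S, f j x ≤ 0}

noncomputable def Jstar {ι : Type*} {d : ℕ} (X : Set (Fin d → ℝ)) (a : Fin d → ℝ)
    (f : ι → (Fin d → ℝ) → ℝ) (S : Set ι) : EReal :=
  sInf ((fun x => ((∑ i, a i * x i : ℝ) : EReal)) '' Sat X f S)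

def IsMinimizer {ι : Type*} {d : ℕ} (X : Set (Fin d → ℝ)) (a : Fin d → ℝ)
    (f : ι → (Fin d → ℝ) → ℝ) (S : Set ι) (x : Fin d → ℝ) : Prop :=
  x ∈ Sat X f S ∧ ∀ y ∈ Sat X f S, ∑ i, a i * x i ≤ ∑ i, a i * y i

section

variable {ι : Type*} {d : ℕ} {X : Set (Fin d → ℝ)} {a : Fin d → ℝ} {f : ι → (Fin d → ℝ) → ℝ}

lemma Sat_anti {S T : Set ι} (h : S ⊆ T) : Sat X f T ⊆ Sat X f S :=
  fun _ hx => ⟨hx.1, fun j hj => hx.2 j (h hj)⟩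

lemma Jstar_mono {S T : Set ι} (h : S ⊆ T) : Jstar X a f S ≤ Jstar X a f T :=
  sInf_le_sInf (Set.image_mono (Sat_anti h))

lemma Jstar_le_of_mem_Sat {S : Set ι} {x : Fin d → ℝ} (hx : x ∈ Sat X f S) :
    Jstar X a f S ≤ ((∑ i, a i * x i : ℝ) : EReal) :=
  sInf_le ⟨x, hx, rfl⟩

lemma Sat_nonempty_of_Jstar_lt_top {S : Set ι} (h : Jstar X a f S < ⊤) :
    (Sat X f S).Nonempty := by
  by_contra hne
  simp [Jstar, Set.not_nonempty_iff_eq_empty.1 hne] at h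

lemma IsMinimizer.Jstar_eq {S : Set ι} {x : Fin d → ℝ} (hx : IsMinimizer X a f S x) :
    Jstar X a f S = ((∑ i, a i * x i : ℝ) : EReal) := by
  refine le_antisymm (Jstar_le_of_mem_Sat hx.1) (le_sInf ?_)
  rintro _ ⟨y, hy, rfl⟩
  exact EReal.coe_le_coe_iff.2 (hx.2 y hy)

lemma IsMinimizer.eq_of_Jstar_eq {S T : Set ι} {x y : Fin d → ℝ} (hST : S ⊆ T)
    (hxu : ∀ z, IsMinimizer X a f S z → z = x) (hy : IsMinimizer X a f T y)
    (hJ : Jstar X a f S = Jstar X a f T) : y = x := by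
  refine hxu y ⟨Sat_anti hST hy.1, fun z hz => ?_⟩
  have : ((∑ i, a i * y i : ℝ) : EReal) ≤ ((∑ i, a i * z i : ℝ) : EReal) :=
    hy.Jstar_eq ▸ hJ ▸ Jstar_le_of_mem_Sat hz
  exact EReal.coe_le_coe_iff.1 this

lemma IsMinimizer.Jstar_lt_Jstar_union_singleton_iff {S : Set ι} {c : ι} {x : Fin d → ℝ}
    (hx : IsMinimizer X a f S x) (hxu : ∀ z, IsMinimizer X a f S z → z = x)
    (hc : (Sat X f (S ∪ {c})).Nonempty → ∃ y, IsMinimizer X a f (S ∪ {c}) y) :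
    Jstar X a f S < Jstar X a f (S ∪ {c}) ↔ 0 < f c x := by
  constructor
  · intro hlt
    by_contra! hfc
    have hxc : x ∈ Sat X f (S ∪ {c}) :=
      ⟨hx.1.1, fun j hj => hj.elim (hx.1.2 j) (fun hjc => hjc ▸ hfc)⟩
    exact (Jstar_le_of_mem_Sat hxc).not_gt (hx.Jstar_eq ▸ hlt)
  · intro hfc
    by_contra! hle
    have hJ : Jstar X a f S = Jstar X a f (S ∪ {c}) :=
      le_antisymm (Jstar_mono Set.subset_union_left) hle
    obtain ⟨y, hy⟩ := hc (Sat_nonempty_of_Jstar_lt_top (hJ ▸ hx.Jstar_eq ▸ EReal.coe_lt_top _))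
    have hyx : y = x := hy.eq_of_Jstar_eq Set.subset_union_left hxu hJ
    exact hfc.not_ge (hyx ▸ hy.1.2 c (Or.inr rfl))

end

theorem locality_general {ι : Type*} {d : ℕ} (X : Set (Fin d → ℝ)) (a : Fin d → ℝ)
    (f : ι → (Fin d → ℝ) → ℝ) (C C1 C2 : Set ι) (c : ι)
    (h1 : C1 ⊆ C) (h2 : C2 ⊆ C) (hc : c ∈ C)
    -- unique minimum condition: every feasible subproblem has a unique minimizer
    (humc : ∀ S ⊆ C, (Sat X f S).Nonempty →
      ∃! x, x ∈ Sat X f S ∧ ∀ y ∈ Sat X f S, (∑ i, a i * x i) ≤ ∑ i, a i * y i)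
    (heq : Jstar X a f C1 = Jstar X a f (C1 ∪ C2))
    (hfin : Jstar X a f C1 < ⊤) :
    Jstar X a f (C1 ∪ {c}) > Jstar X a f C1 ↔
      Jstar X a f (C1 ∪ C2 ∪ {c}) > Jstar X a f (C1 ∪ C2) := by
  have h12 : C1 ∪ C2 ⊆ C := Set.union_subset h1 h2
  have hmin_c : ∀ S ⊆ C, (Sat X f (S ∪ {c})).Nonempty → ∃ y, IsMinimizer X a f (S ∪ {c}) y :=
    fun S hS hne =>
      (humc _ (Set.union_subset hS (Set.singleton_subset_iff.2 hc)) hne).exists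
  obtain ⟨x1, hx1, hx1u⟩ := humc C1 h1 (Sat_nonempty_of_Jstar_lt_top hfin)
  obtain ⟨x12, hx12, hx12u⟩ := humc (C1 ∪ C2) h12 (Sat_nonempty_of_Jstar_lt_top (heq ▸ hfin))
  have hx : x12 = x1 := IsMinimizer.eq_of_Jstar_eq Set.subset_union_left hx1u hx12 heq
  rw [gt_iff_lt, gt_iff_lt,
    IsMinimizer.Jstar_lt_Jstar_union_singleton_iff hx1 hx1u (hmin_c C1 h1),
    IsMinimizer.Jstar_lt_Jstar_union_singleton_iff hx12 hx12u (hmin_c _ h12), hx]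

theorem locality {ι : Type*} {d : ℕ} (X : Set (Fin d → ℝ)) (a : Fin d → ℝ)
    (f : ι → (Fin d → ℝ) → ℝ) (C C1 C2 : Set ι) (c : ι)
    (hCfin : C.Finite) (hXcp : IsCompact X) (hXcv : Convex ℝ X)
    (hf : ∀ j ∈ C, ConvexOn ℝ Set.univ (f j))
    (h1 : C1 ⊆ C) (h2 : C2 ⊆ C) (hc : c ∈ C)
    -- unique minimum condition: every feasible subproblem has a unique minimizer
    (humc : ∀ S ⊆ C, (Sat X f S).Nonempty →
      ∃! x, x ∈ Sat X f S ∧ ∀ y ∈ Sat X f S, (∑ i, a i * x i) ≤ ∑ i, a i * y i)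
    (heq : Jstar X a f C1 = Jstar X a f (C1 ∪ C2))
    (hfin : Jstar X a f C1 < ⊤) :
    Jstar X a f (C1 ∪ {c}) > Jstar X a f C1 ↔
      Jstar X a f (C1 ∪ C2 ∪ {c}) > Jstar X a f (C1 ∪ C2) :=
  locality_general X a f C C1 C2 c h1 h2 hc humc heq hfin
end

section
/- In a feasible convex program with unique optimal solution, every support constraint is active at the optimum: if c ∈ C satisfies J*(C \ {c}) < J*(C), then f_c(x*(C)) = 0, where x*(C) is the optimal solution of P[C]. -/
/-!
If the support constraint `c` were inactive, `f c < 0` would hold on a whole neighbourhood of the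
optimum `x*`, since a convex function on a finite-dimensional space is continuous. So `x*` is a
local minimizer of the linear objective over the feasible set of `C \ {c}`; that set is convex,
so `x*` minimizes there globally and removing `c` does not lower the optimal value.
-/

open Set Filter Topology

theorem IsMinOn.of_isMinOn_inter_nhds {E : Type*} [AddCommGroup E] [TopologicalSpace E]
    [Module ℝ E] [IsTopologicalAddGroup E] [ContinuousSMul ℝ E] {s t : Set E} {φ : E → ℝ}
    {x : E} (hx : x ∈ s) (hφ : ConvexOn ℝ s φ) (ht : t ∈ 𝓝 x) (hmin : IsMinOn φ (s ∩ t) x) :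
    IsMinOn φ s x :=
  IsMinOn.of_isLocalMinOn_of_convexOn hx (mem_of_superset (inter_mem_nhdsWithin s ht) hmin) hφ

section Sat

variable {ι : Type*} {d : ℕ} {X : Set (Fin d → ℝ)} {f : ι → (Fin d → ℝ) → ℝ} {S T : Set ι}

theorem sat_anti (hST : S ⊆ T) : Sat X f T ⊆ Sat X f S :=
  fun _ hx => ⟨hx.1, fun j hj => hx.2 j (hST hj)⟩

theorem sat_diff_singleton_inter_subset (c : ι) :
    Sat X f (S \ {c}) ∩ {x | f c x ≤ 0} ⊆ Sat X f S := by
  rintro x ⟨hx, hcx⟩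
  refine ⟨hx.1, fun j hj => ?_⟩
  rcases eq_or_ne j c with rfl | hjc
  · exact hcx
  · exact hx.2 j ⟨hj, hjc⟩

theorem convex_sat (hX : Convex ℝ X) (hf : ∀ j ∈ S, ConvexOn ℝ univ (f j)) :
    Convex ℝ (Sat X f S) := by
  intro x hx y hy p q hp hq hpq
  refine ⟨hX hx.1 hy.1 hp hq hpq, fun j hj => ?_⟩
  exact ((hf j hj).convex_le 0 ⟨mem_univ x, hx.2 j hj⟩ ⟨mem_univ y, hy.2 j hj⟩ hp hq hpq).2

variable {a : Fin d → ℝ} {x : Fin d → ℝ}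

theorem Jstar_le_of_mem_sat (hx : x ∈ Sat X f S) :
    Jstar X a f S ≤ ((∑ i, a i * x i : ℝ) : EReal) :=
  sInf_le (mem_image_of_mem _ hx)

theorem le_Jstar_of_isMinOn (hmin : IsMinOn (fun y => ∑ i, a i * y i) (Sat X f S) x) :
    ((∑ i, a i * x i : ℝ) : EReal) ≤ Jstar X a f S :=
  le_sInf (forall_mem_image.2 fun _ hy => EReal.coe_le_coe_iff.2 (hmin hy))

end Sat

theorem support_constraint_is_active_general {ι : Type*} {d : ℕ} (X : Set (Fin d → ℝ))
    (a : Fin d → ℝ) (f : ι → (Fin d → ℝ) → ℝ) (C : Set ι) (c : ι)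
    (hXcv : Convex ℝ X)
    (hf : ∀ j ∈ C, ConvexOn ℝ Set.univ (f j)) (hc : c ∈ C)
    (xstar : Fin d → ℝ)
    (hmin : xstar ∈ Sat X f C ∧ ∀ y ∈ Sat X f C, (∑ i, a i * xstar i) ≤ ∑ i, a i * y i)
    (hsupp : Jstar X a f (C \ {c}) < Jstar X a f C) :
    f c xstar = 0 := by
  by_contra hne
  have hneg : f c xstar < 0 := (hmin.1.2 c hc).lt_of_ne hne
  have hinactive : {x | f c x < 0} ∈ 𝓝 xstar :=
    (((hf c hc).continuousOn isOpen_univ).continuousAt univ_mem).eventually_lt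
      continuousAt_const hneg
  have hrelaxed : IsMinOn (fun y => ∑ i, a i * y i) (Sat X f (C \ {c})) xstar := by
    refine IsMinOn.of_isMinOn_inter_nhds (sat_anti sdiff_subset hmin.1)
      ((dotProductBilin ℝ ℝ a).convexOn (convex_sat hXcv fun j hj => hf j hj.1)) hinactive ?_
    exact fun y hy =>
      hmin.2 y (sat_diff_singleton_inter_subset c ⟨hy.1, (mem_ofPred.1 hy.2).le⟩)
  exact (hsupp.trans_le (Jstar_le_of_mem_sat hmin.1)).not_ge (le_Jstar_of_isMinOn hrelaxed)

/-- A support constraint of a feasible convex program with unique minimizer is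
active at the optimum. -/
theorem support_constraint_is_active {ι : Type*} {d : ℕ} (X : Set (Fin d → ℝ))
    (a : Fin d → ℝ) (f : ι → (Fin d → ℝ) → ℝ) (C : Set ι) (c : ι)
    (hCfin : C.Finite) (hXcp : IsCompact X) (hXcv : Convex ℝ X)
    (hf : ∀ j ∈ C, ConvexOn ℝ Set.univ (f j)) (hc : c ∈ C)
    (xstar : Fin d → ℝ)
    (hmin : xstar ∈ Sat X f C ∧ ∀ y ∈ Sat X f C, (∑ i, a i * xstar i) ≤ ∑ i, a i * y i)
    (huniq : ∀ y, (y ∈ Sat X f C ∧ ∀ z ∈ Sat X f C,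
      (∑ i, a i * y i) ≤ ∑ i, a i * z i) → y = xstar)
    (hsupp : Jstar X a f (C \ {c}) < Jstar X a f C) :
    f c xstar = 0 :=
  support_constraint_is_active_general X a f C c hXcv hf hc xstar hmin hsupp
end

section
/- The active constraint set is an invariant constraint set: for a feasible convex program P[C] satisfying the unique minimum condition, J*(Ac(C)) = J*(C), where Ac(C) is the set of constraints tight at the optimal solution. -/
/-!
If some `y` satisfying only the constraints active at `x*` had a smaller objective value, then
moving from `x*` a little towards `y` would keep the active constraints satisfied (by convexity)
and the finitely many inactive ones too (they have slack at `x*`), while strictly decreasing the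
linear objective, contradicting the optimality of `x*` for `P[C]`.
-/

open AffineMap Filter Set Topology

section LineMap

variable {E : Type*} [AddCommGroup E] [Module ℝ E] {s : Set E} {g : E → ℝ} {x y : E}

lemma ConvexOn.apply_lineMap_le (hg : ConvexOn ℝ s g) (hx : x ∈ s) (hy : y ∈ s) {t : ℝ}
    (ht : t ∈ Icc (0 : ℝ) 1) : g (lineMap x y t) ≤ lineMap (g x) (g y) t := by
  rw [lineMap_apply_module, lineMap_apply_module]
  exact hg.2 hx hy (by linarith [ht.2]) ht.1 (by ring)

lemma eventually_lineMap_nonpos {a b : ℝ} (ha : a ≤ 0) (hb : a = 0 → b ≤ 0) :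
    ∀ᶠ t in 𝓝[>] (0 : ℝ), lineMap a b t ≤ 0 := by
  rcases ha.lt_or_eq with ha | rfl
  · have hcont : Continuous fun t : ℝ => lineMap a b t := by
      simp only [lineMap_apply_ring']
      fun_prop
    have : ∀ᶠ t in 𝓝 (0 : ℝ), lineMap a b t < 0 :=
      hcont.continuousAt.eventually_lt continuousAt_const (by simpa using ha)
    exact (eventually_nhdsWithin_of_eventually_nhds this).mono fun _ => le_of_lt
  · filter_upwards [self_mem_nhdsWithin] with t (ht : 0 < t)
    simpa [lineMap_apply_ring'] using mul_nonpos_of_nonneg_of_nonpos ht.le (hb rfl)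

lemma ConvexOn.eventually_apply_lineMap_nonpos (hg : ConvexOn ℝ s g) (hx : x ∈ s) (hy : y ∈ s)
    (hgx : g x ≤ 0) (hgy : g x = 0 → g y ≤ 0) :
    ∀ᶠ t in 𝓝[>] (0 : ℝ), g (lineMap x y t) ≤ 0 := by
  filter_upwards [Ioc_mem_nhdsGT one_pos, eventually_lineMap_nonpos hgx hgy] with t ht hbound
  exact (hg.apply_lineMap_le hx hy (Ioc_subset_Icc_self ht)).trans hbound

end LineMap

lemma sum_mul_lineMap {d : ℕ} (a x y : Fin d → ℝ) (t : ℝ) :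
    ∑ i, a i * lineMap x y t i = lineMap (∑ i, a i * x i) (∑ i, a i * y i) t := by
  simp only [lineMap_apply_module, Pi.add_apply, Pi.smul_apply, smul_eq_mul, mul_add,
    Finset.sum_add_distrib, Finset.mul_sum]
  congr 1 <;> exact Finset.sum_congr rfl fun _ _ => by ring

section Sat

variable {ι : Type*} {d : ℕ} {X : Set (Fin d → ℝ)} {a : Fin d → ℝ} {f : ι → (Fin d → ℝ) → ℝ}
  {C : Set ι} {x : Fin d → ℝ}

lemma Jstar_eq_of_mem_of_forall_le {S : Set ι} (hx : x ∈ Sat X f S)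
    (hle : ∀ y ∈ Sat X f S, ∑ i, a i * x i ≤ ∑ i, a i * y i) :
    Jstar X a f S = ((∑ i, a i * x i : ℝ) : EReal) :=
  le_antisymm (sInf_le ⟨x, hx, rfl⟩) <| le_sInf <| by
    rintro _ ⟨y, hy, rfl⟩
    exact EReal.coe_le_coe_iff.mpr (hle y hy)

lemma eventually_lineMap_mem_Sat (hC : C.Finite) (hX : Convex ℝ X)
    (hf : ∀ j ∈ C, ConvexOn ℝ univ (f j)) (hx : x ∈ Sat X f C) {y : Fin d → ℝ}
    (hy : y ∈ Sat X f {j ∈ C | f j x = 0}) :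
    ∀ᶠ t in 𝓝[>] (0 : ℝ), lineMap x y t ∈ Sat X f C := by
  have hmemX : ∀ᶠ t in 𝓝[>] (0 : ℝ), lineMap x y t ∈ X := by
    filter_upwards [Ioc_mem_nhdsGT one_pos] with t ht
    exact hX.lineMap_mem hx.1 hy.1 (Ioc_subset_Icc_self ht)
  have hconstr : ∀ᶠ t in 𝓝[>] (0 : ℝ), ∀ j ∈ C, f j (lineMap x y t) ≤ 0 :=
    (eventually_all_finite hC).2 fun j hj =>
      (hf j hj).eventually_apply_lineMap_nonpos trivial trivial (hx.2 j hj)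
        fun hxj => hy.2 j ⟨hj, hxj⟩
  filter_upwards [hmemX, hconstr] with t htX htC using ⟨htX, htC⟩

lemma forall_le_of_mem_Sat_active (hC : C.Finite) (hX : Convex ℝ X)
    (hf : ∀ j ∈ C, ConvexOn ℝ univ (f j))
    (hmin : x ∈ Sat X f C ∧ ∀ y ∈ Sat X f C, ∑ i, a i * x i ≤ ∑ i, a i * y i) :
    ∀ y ∈ Sat X f {j ∈ C | f j x = 0}, ∑ i, a i * x i ≤ ∑ i, a i * y i := by
  intro y hy
  by_contra! hlt
  obtain ⟨t, htSat, ht⟩ :=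
    ((eventually_lineMap_mem_Sat hC hX hf hmin.1 hy).and self_mem_nhdsWithin).exists
  have hle := hmin.2 _ htSat
  rw [sum_mul_lineMap] at hle
  exact ((lineMap_lt_left_iff_lt (mem_Ioi.mp ht)).2 hlt).not_ge hle

end Sat

theorem active_set_invariant_general {ι : Type*} {d : ℕ} (X : Set (Fin d → ℝ))
    (a : Fin d → ℝ) (f : ι → (Fin d → ℝ) → ℝ) (C : Set ι)
    (hCfin : C.Finite) (hXcv : Convex ℝ X)
    (hf : ∀ j ∈ C, ConvexOn ℝ Set.univ (f j))
    (xstar : Fin d → ℝ)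
    (hmin : xstar ∈ Sat X f C ∧ ∀ y ∈ Sat X f C,
      (∑ i, a i * xstar i) ≤ ∑ i, a i * y i) :
    Jstar X a f {j ∈ C | f j xstar = 0} = Jstar X a f C := by
  have hxA : xstar ∈ Sat X f {j ∈ C | f j xstar = 0} := ⟨hmin.1.1, fun j hj => hj.2.le⟩
  rw [Jstar_eq_of_mem_of_forall_le hxA (forall_le_of_mem_Sat_active hCfin hXcv hf hmin),
    Jstar_eq_of_mem_of_forall_le hmin.1 hmin.2]

/-- The active constraint set `Ac(C) = {j ∈ C | f_j(x*(C)) = 0}` is an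
invariant constraint set: `J*(Ac(C)) = J*(C)`. -/
theorem active_set_invariant {ι : Type*} {d : ℕ} (X : Set (Fin d → ℝ))
    (a : Fin d → ℝ) (f : ι → (Fin d → ℝ) → ℝ) (C : Set ι)
    (hCfin : C.Finite) (hXcp : IsCompact X) (hXcv : Convex ℝ X)
    (hf : ∀ j ∈ C, ConvexOn ℝ Set.univ (f j))
    -- unique minimum condition
    (humc : ∀ S ⊆ C, (Sat X f S).Nonempty →
      ∃! x, x ∈ Sat X f S ∧ ∀ y ∈ Sat X f S, (∑ i, a i * x i) ≤ ∑ i, a i * y i)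
    (xstar : Fin d → ℝ)
    (hmin : xstar ∈ Sat X f C ∧ ∀ y ∈ Sat X f C,
      (∑ i, a i * xstar i) ≤ ∑ i, a i * y i) :
    Jstar X a f {j ∈ C | f j xstar = 0} = Jstar X a f C :=
  active_set_invariant_general X a f C hCfin hXcv hf xstar hmin
end

section
/- If a constraint c is a support constraint of the random convex program P[C] with constraints convex in the parameter δ, then the parameter δ^(c) is an extreme point of the convex hull of the sampled parameters: Sc(C) ⊆ vert(C). -/
/-!
If `δ c` is not an extreme point of the hull of the sampled parameters, it lies in the convex hull
of the other ones. Each `f x` is convex on `Δ`, so by the maximum principle its value at `δ c` is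
bounded by its value at some other sample: the constraint `c` is implied by the others. Removing it
leaves the feasible set, hence the optimal value, unchanged, so `c` is not a support constraint.
-/

def SatP {ι : Type*} {d l : ℕ} (X : Set (Fin d → ℝ))
    (f : (Fin d → ℝ) → (Fin l → ℝ) → ℝ) (δ : ι → Fin l → ℝ)
    (S : Set ι) : Set (Fin d → ℝ) :=
  {x ∈ X | ∀ j ∈ S, f x (δ j) ≤ 0}

noncomputable def JstarP {ι : Type*} {d l : ℕ} (X : Set (Fin d → ℝ))
    (a : Fin d → ℝ) (f : (Fin d → ℝ) → (Fin l → ℝ) → ℝ) (δ : ι → Fin l → ℝ)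
    (S : Set ι) : EReal :=
  sInf ((fun x => ((∑ i, a i * x i : ℝ) : EReal)) '' SatP X f δ S)

open Set

section ExtremePoints

variable {𝕜 E : Type*} [Field 𝕜] [LinearOrder 𝕜] [IsStrictOrderedRing 𝕜] [AddCommGroup E]
  [Module 𝕜 E] {K s : Set E} {x : E}

theorem mem_extremePoints_convexHull_insert (hK : Convex 𝕜 K) (hx : x ∉ K) :
    x ∈ (convexHull 𝕜 (insert x K)).extremePoints 𝕜 := by
  rcases K.eq_empty_or_nonempty with rfl | hne
  · simp
  rw [convexHull_insert hne, hK.convexHull_eq, mem_extremePoints]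
  refine ⟨mem_convexJoin.2 ⟨x, rfl, hne.some, hne.some_mem, left_mem_segment 𝕜 _ _⟩, ?_⟩
  rintro _ hy _ hz ⟨p, q, hp, hq, hpq, hpqx⟩
  obtain ⟨_, hx₁ : _ = x, k₁, hk₁, a, b, -, hb, hab, rfl⟩ := mem_convexJoin.1 hy
  obtain ⟨_, hx₂ : _ = x, k₂, hk₂, c, d, -, hd, hcd, rfl⟩ := mem_convexJoin.1 hz
  obtain rfl := hx₁.symm
  obtain rfl := hx₂.symm
  obtain rfl : a = 1 - b := by linarith
  obtain rfl : c = 1 - d := by linarith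
  have hw₁ : 0 ≤ p * b := mul_nonneg hp.le hb
  have hw₂ : 0 ≤ q * d := mul_nonneg hq.le hd
  -- Solving for `x` exhibits it as a combination of `k₁, k₂ ∈ K` unless both weights vanish.
  have hcomb : (p * b + q * d) • x = (p * b) • k₁ + (q * d) • k₂ := by
    obtain rfl : q = 1 - p := by linarith
    linear_combination (norm := module) -hpqx
  have hsum : p * b + q * d = 0 := by
    by_contra hne0
    have hpos : 0 < p * b + q * d := (add_nonneg hw₁ hw₂).lt_of_ne' hne0
    refine hx ?_
    convert convex_iff_div.1 hK hk₁ hk₂ hw₁ hw₂ hpos using 1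
    rw [div_eq_inv_mul, div_eq_inv_mul, mul_smul _ (p * b), mul_smul _ (q * d), ← smul_add,
      ← hcomb, inv_smul_smul₀ hpos.ne']
  obtain rfl : b = 0 := by nlinarith
  obtain rfl : d = 0 := by nlinarith
  simp

theorem mem_convexHull_sdiff_of_notMem_extremePoints (hxs : x ∈ s)
    (hx : x ∉ (convexHull 𝕜 s).extremePoints 𝕜) : x ∈ convexHull 𝕜 (s \ {x}) := by
  by_contra hx'
  refine hx ?_
  have := mem_extremePoints_convexHull_insert (convex_convexHull 𝕜 (s \ {x})) hx'
  rwa [insert_eq, convexHull_convexHull_union_right, ← insert_eq, insert_sdiff_singleton,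
    insert_eq_of_mem hxs] at this

end ExtremePoints

theorem satP_insert_of_mem_convexHull {ι : Type*} {d l : ℕ} {X : Set (Fin d → ℝ)}
    {f : (Fin d → ℝ) → (Fin l → ℝ) → ℝ} {δ : ι → Fin l → ℝ} {Δ : Set (Fin l → ℝ)}
    {S : Set ι} {c : ι} (hS : δ '' S ⊆ Δ) (hconv : ∀ x ∈ X, ConvexOn ℝ Δ (f x))
    (hc : δ c ∈ convexHull ℝ (δ '' S)) : SatP X f δ (insert c S) = SatP X f δ S := by
  ext x
  simp only [SatP, mem_sep_iff, forall_mem_insert]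
  refine ⟨fun ⟨hx, _, hS'⟩ ↦ ⟨hx, hS'⟩, fun ⟨hx, hS'⟩ ↦ ⟨hx, ?_, hS'⟩⟩
  obtain ⟨_, ⟨j, hj, rfl⟩, hle⟩ := (hconv x hx).exists_ge_of_mem_convexHull hS hc
  exact hle.trans (hS' j hj)

theorem support_subset_vertices_general {ι : Type*} {d l : ℕ} (X : Set (Fin d → ℝ))
    (a : Fin d → ℝ) (f : (Fin d → ℝ) → (Fin l → ℝ) → ℝ) (δ : ι → Fin l → ℝ)
    (Δ : Set (Fin l → ℝ)) (C : Set ι) (c : ι)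
    (hδ : ∀ j ∈ C, δ j ∈ Δ)
    (hconv : ∀ x ∈ X, ConvexOn ℝ Δ (f x)) (hc : c ∈ C)
    (hsupp : JstarP X a f δ (C \ {c}) < JstarP X a f δ C) :
    δ c ∈ Set.extremePoints ℝ (convexHull ℝ (δ '' C)) := by
  by_contra hext
  have hhull : δ c ∈ convexHull ℝ (δ '' (C \ {c})) := by
    refine convexHull_mono ?_
      (mem_convexHull_sdiff_of_notMem_extremePoints (mem_image_of_mem δ hc) hext)
    rintro _ ⟨⟨j, hj, rfl⟩, hjc⟩
    exact ⟨j, ⟨hj, fun hj' ↦ hjc (congrArg δ hj')⟩, rfl⟩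
  have hsat := satP_insert_of_mem_convexHull (image_subset_iff.2 fun j hj ↦ hδ j hj.1) hconv hhull
  rw [insert_sdiff_singleton, insert_eq_of_mem hc] at hsat
  exact hsupp.ne (by rw [JstarP, JstarP, hsat])

/-- `Sc(C) ⊆ vert(C)`: the parameter of a support constraint of an RCP with
constraints convex in the parameter is an extreme point of the convex hull of
the sampled parameters. -/
theorem support_subset_vertices {ι : Type*} {d l : ℕ} (X : Set (Fin d → ℝ))
    (a : Fin d → ℝ) (f : (Fin d → ℝ) → (Fin l → ℝ) → ℝ) (δ : ι → Fin l → ℝ)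
    (Δ : Set (Fin l → ℝ)) (C : Set ι) (c : ι)
    (hCfin : C.Finite) (hXcp : IsCompact X) (hXcv : Convex ℝ X)
    (hΔ : Convex ℝ Δ) (hδ : ∀ j ∈ C, δ j ∈ Δ)
    (hconv : ∀ x ∈ X, ConvexOn ℝ Δ (f x)) (hc : c ∈ C)
    (hsupp : JstarP X a f δ (C \ {c}) < JstarP X a f δ C) :
    δ c ∈ Set.extremePoints ℝ (convexHull ℝ (δ '' C)) :=
  support_subset_vertices_general X a f δ Δ C c hδ hconv hc hsupp
end

section
/- In a strongly connected directed graph where each node i holds a monotone non-decreasing objective sequence J_i(t) satisfying J_j(t+1) ≥ J_i(t) whenever (i,j) is an edge, if J_i(t) = J_i(t + 2·diam(G)) for some node i and all nodes' values are bounded by a common value J*, then J_j(t + diam(G)) = J_i(t) for all nodes j; that is, an objective constant over 2·diam(G)+1 iterations at one node forces global consensus on the objective value. -/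
section PathPropagation

variable {V α : Type*} [Preorder α] {adj : V → V → Prop} {J : V → ℕ → α}

lemma le_apply_add_length_of_path (hedge : ∀ i j, adj i j → ∀ t, J i t ≤ J j (t + 1))
    (p : ℕ → V) (l : ℕ) (hp : ∀ k < l, adj (p k) (p (k + 1))) (s : ℕ) :
    J (p 0) s ≤ J (p l) (s + l) := by
  induction l with
  | zero => rfl
  | succ m ih =>
    calc J (p 0) s ≤ J (p m) (s + m) := ih fun k hk => hp k (hk.trans m.lt_succ_self)
      _ ≤ J (p (m + 1)) (s + m + 1) := hedge _ _ (hp m m.lt_succ_self) _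

lemma le_apply_add_of_path_length_le (hmono : ∀ i, Monotone (J i))
    (hedge : ∀ i j, adj i j → ∀ t, J i t ≤ J j (t + 1)) {i j : V} {l D : ℕ} (hl : l ≤ D)
    (p : ℕ → V) (hp0 : p 0 = i) (hpl : p l = j) (hp : ∀ k < l, adj (p k) (p (k + 1)))
    (s : ℕ) : J i s ≤ J j (s + D) := by
  subst hp0 hpl
  exact (le_apply_add_length_of_path hedge p l hp s).trans (hmono _ (by omega))

end PathPropagation

theorem constant_objective_implies_consensus_general {n : ℕ} (adj : Fin n → Fin n → Prop)
    (D : ℕ) (J : Fin n → ℕ → EReal)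
    (hmono : ∀ i : Fin n, Monotone (J i))
    (hedge : ∀ i j : Fin n, adj i j → ∀ t : ℕ, J i t ≤ J j (t + 1))
    -- strong connectivity with diameter at most `D`:
    (hdiam : ∀ i j : Fin n, ∃ l ≤ D, ∃ p : ℕ → Fin n,
      p 0 = i ∧ p l = j ∧ ∀ k < l, adj (p k) (p (k + 1)))
    (i : Fin n) (t : ℕ) (hconst : J i t = J i (t + 2 * D)) :
    ∀ j : Fin n, J j (t + D) = J i t := by
  intro j
  obtain ⟨l, hl, p, hp0, hpl, hp⟩ := hdiam i j
  obtain ⟨l', hl', q, hq0, hql, hq⟩ := hdiam j i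
  apply le_antisymm
  · calc J j (t + D) ≤ J i (t + D + D) :=
          le_apply_add_of_path_length_le hmono hedge hl' q hq0 hql hq _
      _ = J i t := by rw [add_assoc, ← two_mul, hconst]
  · exact le_apply_add_of_path_length_le hmono hedge hl p hp0 hpl hp t

/-- In a strongly connected digraph of diameter `D`, if each node's objective
sequence is non-decreasing, respects the edge inequality `J_j(t+1) ≥ J_i(t)`,
and is uniformly bounded, then an objective that is constant over
`2·D + 1` iterations at one node forces consensus: `J_j(t+D) = J_i(t)` for
all nodes `j`. -/
theorem constant_objective_implies_consensus {n : ℕ} (adj : Fin n → Fin n → Prop)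
    (D : ℕ) (J : Fin n → ℕ → EReal) (Jmax : EReal)
    (hmono : ∀ i : Fin n, Monotone (J i))
    (hedge : ∀ i j : Fin n, adj i j → ∀ t : ℕ, J i t ≤ J j (t + 1))
    -- strong connectivity with diameter at most `D`:
    (hdiam : ∀ i j : Fin n, ∃ l ≤ D, ∃ p : ℕ → Fin n,
      p 0 = i ∧ p l = j ∧ ∀ k < l, adj (p k) (p (k + 1)))
    (hbound : ∀ (i : Fin n) (t : ℕ), J i t ≤ Jmax)
    (i : Fin n) (t : ℕ) (hconst : J i t = J i (t + 2 * D)) :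
    ∀ j : Fin n, J j (t + D) = J i t :=
  constant_objective_implies_consensus_general adj D J hmono hedge hdiam i t hconst
end

section
/- VCC convergence in diameter iterations: consider sets V_i(t) of parameter indices at nodes of a strongly connected directed graph, initialized as V_i(0) = vert(C_i) and updated by V_i(t+1) = vert(V_i(t) ∪ ∪_{j ∈ N_in(i)} V_j(t)). Then after T = diam(G) iterations, Sat(V_i(T)) = Sat(C) for every node i, where C = ∪_i C_i; hence the unique local optimal solution equals the global scenario solution. -/
/-- Indices of the constraints whose parameter vectors are extreme points of
the convex hull of the parameters indexed by `S`. -/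
def vertP {ι : Type*} {l : ℕ} (δ : ι → Fin l → ℝ) (S : Set ι) : Set ι :=
  {j ∈ S | δ j ∈ Set.extremePoints ℝ (convexHull ℝ (δ '' S))}

/-!
By Krein–Milman, the hull of finitely many parameters is the hull of its extreme points, and the
sublevel set `{δ | f x δ ≤ 0}` is convex, so a point satisfying the constraints of the extreme
parameters satisfies all of them: `vertP` never changes the feasible set. Hence one consensus
step makes the feasible set of node `i` contained in that of each of its in-neighbours at the
previous step, and following a path of length at most `D` from any node `k` to `i` shows
`Sat (V i D) ⊆ Sat (C k)`.
-/

open Set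

section FiniteHull

variable {E : Type*} [AddCommGroup E] [Module ℝ E] [TopologicalSpace E] [T2Space E]
  [IsTopologicalAddGroup E] [ContinuousSMul ℝ E] [LocallyConvexSpace ℝ E] {s t : Set E}

theorem Set.Finite.convexHull_extremePoints_convexHull (hs : s.Finite) :
    convexHull ℝ ((convexHull ℝ s).extremePoints ℝ) = convexHull ℝ s := by
  have hext : ((convexHull ℝ s).extremePoints ℝ).Finite :=
    hs.subset extremePoints_convexHull_subset
  have := closure_convexHull_extremePoints (hs.isCompact_convexHull (𝕜 := ℝ))
    (convex_convexHull ℝ s)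
  rwa [(hext.isCompact_convexHull (𝕜 := ℝ)).isClosed.closure_eq] at this

theorem Set.Finite.convexHull_subset_of_extremePoints_subset (hs : s.Finite)
    (ht : Convex ℝ t) (hst : (convexHull ℝ s).extremePoints ℝ ⊆ t) :
    convexHull ℝ s ⊆ t :=
  hs.convexHull_extremePoints_convexHull ▸ convexHull_min hst ht

end FiniteHull

theorem vertP_subset {ι : Type*} {l : ℕ} (δ : ι → Fin l → ℝ) (S : Set ι) : vertP δ S ⊆ S :=
  fun _ hj => hj.1

section SatP

variable {ι : Type*} {d l : ℕ} (X : Set (Fin d → ℝ)) (f : (Fin d → ℝ) → (Fin l → ℝ) → ℝ)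
  (δ : ι → Fin l → ℝ)

theorem satP_subset (S : Set ι) : SatP X f δ S ⊆ X :=
  fun _ hx => hx.1

theorem satP_anti {S S' : Set ι} (h : S ⊆ S') : SatP X f δ S' ⊆ SatP X f δ S :=
  fun _ hx => ⟨hx.1, fun j hj => hx.2 j (h hj)⟩

theorem satP_iUnion {σ : Type*} (C : σ → Set ι) :
    SatP X f δ (⋃ k, C k) = X ∩ ⋂ k, SatP X f δ (C k) := by
  ext x
  simp only [SatP, mem_iUnion, mem_inter_iff, mem_iInter, mem_ofPred_eq]
  constructor
  · exact fun ⟨hX, h⟩ => ⟨hX, fun k => ⟨hX, fun j hj => h j ⟨k, hj⟩⟩⟩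
  · exact fun ⟨hX, h⟩ => ⟨hX, fun j ⟨k, hj⟩ => (h k).2 j hj⟩

theorem satP_vertP (Δ : Set (Fin l → ℝ)) (hδ : ∀ j, δ j ∈ Δ)
    (hconv : ∀ x ∈ X, ConvexOn ℝ Δ (f x)) {S : Set ι} (hS : S.Finite) :
    SatP X f δ (vertP δ S) = SatP X f δ S := by
  refine (satP_anti X f δ (vertP_subset δ S)).antisymm' ?_
  rintro x ⟨hxX, hx⟩
  refine ⟨hxX, fun j hj => ?_⟩
  have hhull : convexHull ℝ (δ '' S) ⊆ {y ∈ Δ | f x y ≤ 0} := by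
    refine (hS.image δ).convexHull_subset_of_extremePoints_subset
      ((hconv x hxX).convex_le 0) fun e he => ?_
    obtain ⟨j', hj', rfl⟩ := extremePoints_convexHull_subset he
    exact ⟨hδ j', hx j' ⟨hj', he⟩⟩
  exact (hhull (subset_convexHull ℝ _ (mem_image_of_mem δ hj))).2

end SatP

theorem le_of_adj_chain {σ α : Type*} [Preorder α] {adj : σ → σ → Prop} {W : σ → ℕ → α}
    (hW : ∀ i j t, adj j i → W i (t + 1) ≤ W j t) {p : ℕ → σ} {len : ℕ}
    (hp : ∀ k < len, adj (p k) (p (k + 1))) (t : ℕ) : W (p len) (len + t) ≤ W (p 0) t := by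
  induction len with
  | zero => simp
  | succ len ih =>
    calc W (p (len + 1)) (len + 1 + t) = W (p (len + 1)) (len + t + 1) := by
          rw [Nat.add_right_comm]
      _ ≤ W (p len) (len + t) := hW _ _ _ (hp len (Nat.lt_succ_self len))
      _ ≤ W (p 0) t := ih fun k hk => hp k (Nat.lt_succ_of_lt hk)

section Consensus

variable {σ ι : Type*} {d l : ℕ} {X : Set (Fin d → ℝ)} {f : (Fin d → ℝ) → (Fin l → ℝ) → ℝ}
  {δ : ι → Fin l → ℝ} {adj : σ → σ → Prop} {C : σ → Set ι} {V : σ → ℕ → Set ι}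

theorem vcc_subset_iUnion (hV0 : ∀ i, V i 0 = vertP δ (C i))
    (hVstep : ∀ i t, V i (t + 1) = vertP δ (V i t ∪ ⋃ j ∈ {j | adj j i}, V j t))
    (t : ℕ) (i : σ) : V i t ⊆ ⋃ k, C k := by
  induction t generalizing i with
  | zero => exact hV0 i ▸ (vertP_subset δ _).trans (subset_iUnion C i)
  | succ t ih =>
    rw [hVstep]
    exact (vertP_subset δ _).trans (union_subset (ih i) (iUnion₂_subset fun j _ => ih j))

theorem satP_vcc_succ [Finite σ] (Δ : Set (Fin l → ℝ)) (hδ : ∀ j, δ j ∈ Δ)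
    (hconv : ∀ x ∈ X, ConvexOn ℝ Δ (f x)) (hCfin : ∀ i, (C i).Finite)
    (hV0 : ∀ i, V i 0 = vertP δ (C i))
    (hVstep : ∀ i t, V i (t + 1) = vertP δ (V i t ∪ ⋃ j ∈ {j | adj j i}, V j t))
    (i : σ) (t : ℕ) :
    SatP X f δ (V i (t + 1)) = SatP X f δ (V i t ∪ ⋃ j ∈ {j | adj j i}, V j t) := by
  have hsub : V i t ∪ ⋃ j ∈ {j | adj j i}, V j t ⊆ ⋃ k, C k :=
    union_subset (vcc_subset_iUnion hV0 hVstep t i)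
      (iUnion₂_subset fun j _ => vcc_subset_iUnion hV0 hVstep t j)
  rw [hVstep, satP_vertP X f δ Δ hδ hconv ((finite_iUnion hCfin).subset hsub)]

theorem satP_vcc_succ_subset_self [Finite σ] (Δ : Set (Fin l → ℝ)) (hδ : ∀ j, δ j ∈ Δ)
    (hconv : ∀ x ∈ X, ConvexOn ℝ Δ (f x)) (hCfin : ∀ i, (C i).Finite)
    (hV0 : ∀ i, V i 0 = vertP δ (C i))
    (hVstep : ∀ i t, V i (t + 1) = vertP δ (V i t ∪ ⋃ j ∈ {j | adj j i}, V j t))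
    (i : σ) (t : ℕ) : SatP X f δ (V i (t + 1)) ⊆ SatP X f δ (V i t) := by
  rw [satP_vcc_succ Δ hδ hconv hCfin hV0 hVstep]
  exact satP_anti X f δ subset_union_left

theorem satP_vcc_succ_subset_of_adj [Finite σ] (Δ : Set (Fin l → ℝ)) (hδ : ∀ j, δ j ∈ Δ)
    (hconv : ∀ x ∈ X, ConvexOn ℝ Δ (f x)) (hCfin : ∀ i, (C i).Finite)
    (hV0 : ∀ i, V i 0 = vertP δ (C i))
    (hVstep : ∀ i t, V i (t + 1) = vertP δ (V i t ∪ ⋃ j ∈ {j | adj j i}, V j t))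
    (i j : σ) (t : ℕ) (hji : adj j i) : SatP X f δ (V i (t + 1)) ⊆ SatP X f δ (V j t) := by
  rw [satP_vcc_succ Δ hδ hconv hCfin hV0 hVstep]
  exact satP_anti X f δ <| subset_union_of_subset_right
    (subset_biUnion_of_mem (u := (V · t)) (show j ∈ {j | adj j i} from hji)) _

end Consensus

theorem vcc_convergence_general {ι : Type*} {d l n : ℕ} (X : Set (Fin d → ℝ))
    (a : Fin d → ℝ) (f : (Fin d → ℝ) → (Fin l → ℝ) → ℝ) (δ : ι → Fin l → ℝ)
    (Δ : Set (Fin l → ℝ)) (hδ : ∀ j, δ j ∈ Δ)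
    (hconv : ∀ x ∈ X, ConvexOn ℝ Δ (f x))
    (adj : Fin n → Fin n → Prop) (D : ℕ)
    -- strong connectivity with diameter at most `D`:
    (hdiam : ∀ i j : Fin n, ∃ len ≤ D, ∃ p : ℕ → Fin n,
      p 0 = i ∧ p len = j ∧ ∀ k < len, adj (p k) (p (k + 1)))
    (Ci : Fin n → Set ι) (hCfin : ∀ i, (Ci i).Finite)
    (V : Fin n → ℕ → Set ι)
    (hV0 : ∀ i, V i 0 = vertP δ (Ci i))
    (hVstep : ∀ i t, V i (t + 1) =
      vertP δ (V i t ∪ ⋃ j ∈ {j : Fin n | adj j i}, V j t)) :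
    ∀ i : Fin n,
      SatP X f δ (V i D) = SatP X f δ (⋃ k, Ci k) ∧
      ∀ x : Fin d → ℝ,
        ((x ∈ SatP X f δ (V i D) ∧ ∀ y ∈ SatP X f δ (V i D),
            (∑ k, a k * x k) ≤ ∑ k, a k * y k) ↔
          (x ∈ SatP X f δ (⋃ k, Ci k) ∧ ∀ y ∈ SatP X f δ (⋃ k, Ci k),
            (∑ k, a k * x k) ≤ ∑ k, a k * y k)) := by
  have hself := satP_vcc_succ_subset_self Δ hδ hconv hCfin hV0 hVstep
  have hadj := satP_vcc_succ_subset_of_adj Δ hδ hconv hCfin hV0 hVstep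
  intro i
  have hsat : SatP X f δ (V i D) = SatP X f δ (⋃ k, Ci k) := by
    refine (satP_anti X f δ (vcc_subset_iUnion hV0 hVstep D i)).antisymm' ?_
    rw [satP_iUnion]
    refine subset_inter (satP_subset X f δ _) (subset_iInter fun k => ?_)
    obtain ⟨len, hlen, p, rfl, rfl, hp⟩ := hdiam k i
    calc SatP X f δ (V (p len) D) = SatP X f δ (V (p len) (len + (D - len))) := by
          rw [Nat.add_sub_cancel' hlen]
      _ ⊆ SatP X f δ (V (p 0) (D - len)) :=
          le_of_adj_chain (W := fun i t => SatP X f δ (V i t)) hadj hp _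
      _ ⊆ SatP X f δ (V (p 0) 0) :=
          antitone_nat_of_succ_le (f := fun t => SatP X f δ (V (p 0) t)) (hself (p 0))
            (Nat.zero_le _)
      _ = SatP X f δ (Ci (p 0)) := by rw [hV0, satP_vertP X f δ Δ hδ hconv (hCfin _)]
  exact ⟨hsat, fun x => by rw [hsat]⟩

/-- VCC convergence: after `D = diam(G)` iterations of the vertex constraints
consensus update, each node's feasible set equals the global feasible set,
hence the local optimal solutions coincide with the global scenario solution. -/
theorem vcc_convergence {ι : Type*} {d l n : ℕ} (X : Set (Fin d → ℝ))
    (a : Fin d → ℝ) (f : (Fin d → ℝ) → (Fin l → ℝ) → ℝ) (δ : ι → Fin l → ℝ)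
    (Δ : Set (Fin l → ℝ)) (hΔ : Convex ℝ Δ) (hδ : ∀ j, δ j ∈ Δ)
    (hconv : ∀ x ∈ X, ConvexOn ℝ Δ (f x))
    (hXcp : IsCompact X) (hXcv : Convex ℝ X)
    (adj : Fin n → Fin n → Prop) (D : ℕ)
    -- strong connectivity with diameter at most `D`:
    (hdiam : ∀ i j : Fin n, ∃ len ≤ D, ∃ p : ℕ → Fin n,
      p 0 = i ∧ p len = j ∧ ∀ k < len, adj (p k) (p (k + 1)))
    (Ci : Fin n → Set ι) (hCfin : ∀ i, (Ci i).Finite)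
    (V : Fin n → ℕ → Set ι)
    (hV0 : ∀ i, V i 0 = vertP δ (Ci i))
    (hVstep : ∀ i t, V i (t + 1) =
      vertP δ (V i t ∪ ⋃ j ∈ {j : Fin n | adj j i}, V j t)) :
    ∀ i : Fin n,
      SatP X f δ (V i D) = SatP X f δ (⋃ k, Ci k) ∧
      ∀ x : Fin d → ℝ,
        ((x ∈ SatP X f δ (V i D) ∧ ∀ y ∈ SatP X f δ (V i D),
            (∑ k, a k * x k) ≤ ∑ k, a k * y k) ↔
          (x ∈ SatP X f δ (⋃ k, Ci k) ∧ ∀ y ∈ SatP X f δ (⋃ k, Ci k),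
            (∑ k, a k * x k) ≤ ∑ k, a k * y k)) :=
  vcc_convergence_general X a f δ Δ hδ hconv adj D hdiam Ci hCfin V hV0 hVstep
end
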